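/- arXiv:1803.01953 — 2 statements merged into one kernel-verified Lean document; each statement's English description precedes it below -/
import Mathlib

section
/- Let F be a simple graph and let 1 ≤ t ≤ |V(F)|-1. Let c be the minimum, over all t-admissible partitions P of F, of the chromatic number of the graph obtained by contracting each set of P to a single vertex. If c ≥ 3, then for every integer r with 2 ≤ r ≤ (c-1)·t, there exists a constant c' > 0 such that for all sufficiently large n there is an r-uniform hypergraph on n vertices containing no Berge-F with at least c'·n^2 hyperedges; consequently ex_r(n,F) = Ω(n^2) for all 2 ≤ r ≤ (c-1)·t. -/
open Filter

/-- `G` contains a copy of `F` (a subgraph isomorphic to `F`). -/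
def ContainsCopy {α β : Type*} (F : SimpleGraph α) (G : SimpleGraph β) : Prop :=
  ∃ f : α → β, Function.Injective f ∧ ∀ ⦃u v⦄, F.Adj u v → G.Adj (f u) (f v)

/-- The hypergraph `H` (a finite family of hyperedges) contains a Berge-`F`. -/
def IsBerge {α V : Type*} (F : SimpleGraph α) (H : Finset (Finset V)) : Prop :=
  ∃ (ψ : α → V) (φ : Sym2 α → Finset V),
    Function.Injective ψ ∧ Set.InjOn φ F.edgeSet ∧
    (∀ e ∈ F.edgeSet, φ e ∈ H) ∧
    ∀ ⦃u v⦄, F.Adj u v → ψ u ∈ φ s(u, v) ∧ ψ v ∈ φ s(u, v)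

/-- `exr r n F`: max number of hyperedges of an `r`-uniform Berge-`F`-free
hypergraph on `n` vertices. -/
noncomputable def exr {α : Type*} (r n : ℕ) (F : SimpleGraph α) : ℕ :=
  sSup {m | ∃ H : Finset (Finset (Fin n)),
    (∀ e ∈ H, e.card = r) ∧ ¬ IsBerge F H ∧ H.card = m}

/-- A hypergraph is linear if distinct hyperedges meet in at most one vertex. -/
def LinearHypergraph {V : Type*} [DecidableEq V] (H : Finset (Finset V)) : Prop :=
  ∀ e₁ ∈ H, ∀ e₂ ∈ H, e₁ ≠ e₂ → (e₁ ∩ e₂).card ≤ 1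

/-- `exrL r n F`: max number of hyperedges of an `r`-uniform linear
Berge-`F`-free hypergraph on `n` vertices. -/
noncomputable def exrL {α : Type*} (r n : ℕ) (F : SimpleGraph α) : ℕ :=
  sSup {m | ∃ H : Finset (Finset (Fin n)),
    (∀ e ∈ H, e.card = r) ∧ LinearHypergraph H ∧ ¬ IsBerge F H ∧ H.card = m}

/-- The Ramsey number of `F` and `G`. -/
noncomputable def ramsey {α β : Type*} (F : SimpleGraph α) (G : SimpleGraph β) : ℕ :=
  sInf {N | ∀ C : SimpleGraph (Fin N), ContainsCopy F C ∨ ContainsCopy G Cᶜ}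

/-- The 2-shadow of a hypergraph. -/
def shadow {V : Type*} (H : Finset (Finset V)) : SimpleGraph V where
  Adj u v := u ≠ v ∧ ∃ e ∈ H, u ∈ e ∧ v ∈ e
  symm := by constructor; rintro u v ⟨h, e, he, hu, hv⟩; exact ⟨h.symm, e, he, hv, hu⟩
  loopless := ⟨fun u h => h.1 rfl⟩

/-- The graph Turán number `ex(n,F)`. -/
noncomputable def exGraph {α : Type*} (n : ℕ) (F : SimpleGraph α) : ℕ :=
  sSup {m | ∃ G : SimpleGraph (Fin n), ¬ ContainsCopy F G ∧ G.edgeSet.ncard = m}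

/-- `ex(n, K_r, F)`: max number of `r`-cliques in an `F`-free graph on `n` vertices. -/
noncomputable def exClique {α : Type*} (n r : ℕ) (F : SimpleGraph α) : ℕ :=
  sSup {m | ∃ G : SimpleGraph (Fin n), ¬ ContainsCopy F G ∧
    {s : Finset (Fin n) | G.IsNClique r s}.ncard = m}

/-- A `t`-admissible partition of the vertices of `F`: parts have size at most `t`
and between any two distinct parts there is at most one edge of `F`. -/
def IsAdmissible {α : Type*} [Fintype α] [DecidableEq α] (t : ℕ) (F : SimpleGraph α)
    (P : Finpartition (Finset.univ : Finset α)) : Prop :=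
  (∀ A ∈ P.parts, A.card ≤ t) ∧
  ∀ A ∈ P.parts, ∀ B ∈ P.parts, A ≠ B →
    {p : α × α | p.1 ∈ A ∧ p.2 ∈ B ∧ F.Adj p.1 p.2}.ncard ≤ 1

/-- The graph obtained from `F` by contracting each part of the partition `P`. -/
def contractGraph {α : Type*} [Fintype α] [DecidableEq α] (F : SimpleGraph α)
    (P : Finpartition (Finset.univ : Finset α)) : SimpleGraph {A // A ∈ P.parts} where
  Adj A B := A ≠ B ∧ ∃ v ∈ (A : Finset α), ∃ w ∈ (B : Finset α), F.Adj v w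
  symm := by
    constructor
    rintro A B ⟨hne, v, hv, w, hw, hadj⟩
    exact ⟨hne.symm, w, hw, v, hv, hadj.symm⟩
  loopless := by constructor; rintro A ⟨hne, -⟩; exact hne rfl


namespace Stmt4Aux

def sz (r k ℓ : ℕ) : ℕ := r / k + if ℓ < r % k then 1 else 0

lemma sz_pos {r k : ℕ} (hk : 0 < k) (hkr : k ≤ r) (ℓ : ℕ) : 1 ≤ sz r k ℓ := by
  have : 1 ≤ r / k := (Nat.one_le_div_iff hk).2 hkr
  unfold sz; omega

lemma sz_le {r k t : ℕ} (hk : 0 < k) (hrkt : r ≤ k * t) (ℓ : ℕ) : sz r k ℓ ≤ t := by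
  have hdle : r / k ≤ t := by
    calc r / k ≤ (k * t) / k := Nat.div_le_div_right hrkt
    _ = t := Nat.mul_div_cancel_left t hk
  unfold sz
  split
  · rename_i hℓ
    have hmod : r % k ≠ 0 := by omega
    have : r ≠ k * t := by
      intro h; subst h
      simp [Nat.mul_mod_right] at hmod
    have hlt : r < k * t := lt_of_le_of_ne hrkt this
    have : r / k < t := by
      rw [Nat.div_lt_iff_lt_mul hk]
      linarith
    omega
  · omega

lemma sum_sz {r k : ℕ} (hk : 0 < k) : ∑ ℓ ∈ Finset.range k, sz r k ℓ = r := by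
  unfold sz
  rw [Finset.sum_add_distrib, Finset.sum_const, Finset.card_range, smul_eq_mul]
  have h1 : (∑ ℓ ∈ Finset.range k, if ℓ < r % k then (1:ℕ) else 0) = r % k := by
    rw [Finset.sum_boole]
    have : Finset.filter (fun ℓ => ℓ < r % k) (Finset.range k) = Finset.range (r % k) := by
      ext x
      simp only [Finset.mem_filter, Finset.mem_range]
      have := Nat.mod_lt r hk
      omega
    rw [this]
    simp
  rw [h1]
  have := Nat.div_add_mod r k
  omega

def blk (t k q r ℓ v : ℕ) : Finset ℕ :=
  (Finset.range (sz r k ℓ)).image (fun s => (ℓ * (k * q) + v) * t + s)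

lemma mem_blk {t k q r ℓ v x : ℕ} :
    x ∈ blk t k q r ℓ v ↔ ∃ s, s < sz r k ℓ ∧ x = (ℓ * (k * q) + v) * t + s := by
  simp only [blk, Finset.mem_image, Finset.mem_range]
  constructor
  · rintro ⟨s, hs, rfl⟩; exact ⟨s, hs, rfl⟩
  · rintro ⟨s, hs, rfl⟩; exact ⟨s, hs, rfl⟩

lemma card_blk {t k q r ℓ v : ℕ} : (blk t k q r ℓ v).card = sz r k ℓ := by
  rw [blk, Finset.card_image_of_injective _ (fun a b h => by omega), Finset.card_range]

lemma blk_div {t k q r ℓ v x : ℕ} (ht : 0 < t) (hk : 0 < k) (hrkt : r ≤ k * t)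
    (hx : x ∈ blk t k q r ℓ v) : x / t = ℓ * (k * q) + v := by
  obtain ⟨s, hs, rfl⟩ := mem_blk.1 hx
  have hst : s < t := lt_of_lt_of_le hs (sz_le hk hrkt ℓ)
  rw [mul_comm, Nat.mul_add_div ht, Nat.div_eq_of_lt hst, add_zero]

lemma decomp_inj {k q ℓ v ℓ' v' : ℕ} (hkq : 0 < k * q) (hv : v < k * q) (hv' : v' < k * q)
    (h : ℓ * (k * q) + v = ℓ' * (k * q) + v') : ℓ = ℓ' ∧ v = v' := by
  have h1 : (ℓ * (k * q) + v) / (k * q) = ℓ := by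
    rw [mul_comm ℓ, Nat.mul_add_div hkq, Nat.div_eq_of_lt hv, add_zero]
  have h2 : (ℓ' * (k * q) + v') / (k * q) = ℓ' := by
    rw [mul_comm ℓ', Nat.mul_add_div hkq, Nat.div_eq_of_lt hv', add_zero]
  have hℓ : ℓ = ℓ' := by rw [← h1, ← h2, h]
  subst hℓ
  exact ⟨rfl, by omega⟩

def He (t k q r i j : ℕ) : Finset ℕ :=
  (Finset.range k).biUnion (fun ℓ => blk t k q r ℓ (i + ℓ * j))

lemma mem_He {t k q r i j x : ℕ} :
    x ∈ He t k q r i j ↔ ∃ ℓ, ℓ < k ∧ x ∈ blk t k q r ℓ (i + ℓ * j) := by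
  simp [He, Finset.mem_biUnion]

lemma v_lt {k q i j ℓ : ℕ} (hi : i < q) (hj : j < q) (hℓ : ℓ < k) : i + ℓ * j < k * q := by
  have h2 : ℓ * j + ℓ ≤ ℓ * q := by
    have := Nat.mul_le_mul_left ℓ (show j + 1 ≤ q by omega)
    rwa [mul_add, mul_one] at this
  have h1 : ℓ * q + q ≤ k * q := by
    have := Nat.mul_le_mul_right q (show ℓ + 1 ≤ k by omega)
    rwa [add_mul, one_mul] at this
  linarith

lemma He_decode {t k q r i j x : ℕ} (ht : 0 < t) (hk : 0 < k) (hrkt : r ≤ k * t)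
    (hi : i < q) (hj : j < q) (hx : x ∈ He t k q r i j) :
    ∃ ℓ, ℓ < k ∧ i + ℓ * j < k * q ∧ x / t = ℓ * (k * q) + (i + ℓ * j) := by
  obtain ⟨ℓ, hℓ, hmem⟩ := mem_He.1 hx
  exact ⟨ℓ, hℓ, v_lt hi hj hℓ, blk_div ht hk hrkt hmem⟩

lemma He_lt {t k q r i j x : ℕ} (ht : 0 < t) (hk : 0 < k) (hrkt : r ≤ k * t)
    (hi : i < q) (hj : j < q) (hx : x ∈ He t k q r i j) : x < k * k * q * t := by
  obtain ⟨ℓ, hℓ, hv, hdiv⟩ := He_decode ht hk hrkt hi hj hx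
  have h1 : x / t + 1 ≤ k * k * q := by
    have h2 : ℓ * (k * q) + (k * q) ≤ k * (k * q) := by
      have := Nat.mul_le_mul_right (k * q) (show ℓ + 1 ≤ k by omega)
      rwa [add_mul, one_mul] at this
    have h3 : k * (k * q) = k * k * q := by ring
    linarith
  have h4 : x < (x / t + 1) * t := by
    have := Nat.div_add_mod x t
    have := Nat.mod_lt x ht
    nlinarith
  calc x < (x / t + 1) * t := h4
  _ ≤ (k * k * q) * t := Nat.mul_le_mul_right t h1

lemma card_He {t k q r i j : ℕ} (ht : 0 < t) (hk : 0 < k) (hrkt : r ≤ k * t)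
    (hi : i < q) (hj : j < q) : (He t k q r i j).card = r := by
  have hdisj : ∀ ℓ ∈ Finset.range k, ∀ ℓ' ∈ Finset.range k, ℓ ≠ ℓ' →
      Disjoint (blk t k q r ℓ (i + ℓ * j)) (blk t k q r ℓ' (i + ℓ' * j)) := by
    intro ℓ hℓ ℓ' hℓ' hne
    rw [Finset.mem_range] at hℓ hℓ'
    rw [Finset.disjoint_left]
    intro x hx hx'
    have d1 := blk_div (ℓ := ℓ) ht hk hrkt hx
    have d2 := blk_div (ℓ := ℓ') ht hk hrkt hx'
    have hkq : 0 < k * q := by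
      have := v_lt hi hj hℓ; omega
    have := decomp_inj hkq (v_lt hi hj hℓ) (v_lt hi hj hℓ') (d1.symm.trans d2)
    exact hne this.1
  rw [He, Finset.card_biUnion hdisj]
  calc ∑ ℓ ∈ Finset.range k, (blk t k q r ℓ (i + ℓ * j)).card
      = ∑ ℓ ∈ Finset.range k, sz r k ℓ := Finset.sum_congr rfl (fun ℓ _ => card_blk)
    _ = r := sum_sz hk

lemma He_two {i j i' j' ℓ₁ ℓ₂ : ℕ}
    (h1 : i + ℓ₁ * j = i' + ℓ₁ * j') (h2 : i + ℓ₂ * j = i' + ℓ₂ * j')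
    (hne : ℓ₁ ≠ ℓ₂) : i = i' ∧ j = j' := by
  have z1 : (i : ℤ) + ℓ₁ * j = i' + ℓ₁ * j' := by exact_mod_cast h1
  have z2 : (i : ℤ) + ℓ₂ * j = i' + ℓ₂ * j' := by exact_mod_cast h2
  have h3 : ((ℓ₁ : ℤ) - ℓ₂) * ((j : ℤ) - j') = 0 := by linear_combination z1 - z2
  have hℓ : (ℓ₁ : ℤ) - ℓ₂ ≠ 0 := by
    intro h; apply hne; exact_mod_cast sub_eq_zero.1 h
  have hj : (j : ℤ) = j' := by
    rcases mul_eq_zero.1 h3 with h | h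
    · exact absurd h hℓ
    · linarith [sub_eq_zero.1 h]
  have hjj : j = j' := by exact_mod_cast hj
  subst hjj
  exact ⟨by omega, rfl⟩

/-- The key "shared index" lemma: if an element lies in a given block of a hyperedge,
we can recover the class and index. Used for injectivity of `He`. -/
lemma He_shared {t k q r i j i' j' ℓ : ℕ} (ht : 0 < t) (hk : 0 < k) (hrkt : r ≤ k * t)
    (hkr : k ≤ r) (hℓ : ℓ < k)
    (hi : i < q) (hj : j < q) (hi' : i' < q) (hj' : j' < q)
    (h : He t k q r i j = He t k q r i' j') : i + ℓ * j = i' + ℓ * j' := by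
  have hkq : 0 < k * q := by have := v_lt hi hj hℓ; omega
  set x := (ℓ * (k * q) + (i + ℓ * j)) * t with hx
  have hxblk : x ∈ blk t k q r ℓ (i + ℓ * j) :=
    mem_blk.2 ⟨0, sz_pos hk hkr ℓ, (add_zero _).symm⟩
  have hxHe : x ∈ He t k q r i j := mem_He.2 ⟨ℓ, hℓ, hxblk⟩
  rw [h] at hxHe
  obtain ⟨ℓ'', hℓ'', hv'', hdiv''⟩ := He_decode ht hk hrkt hi' hj' hxHe
  have hdiv : x / t = ℓ * (k * q) + (i + ℓ * j) := blk_div ht hk hrkt hxblk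
  obtain ⟨hℓeq, hveq⟩ := decomp_inj hkq (v_lt hi hj hℓ) hv'' (hdiv.symm.trans hdiv'')
  rw [← hℓeq] at hveq
  exact hveq

lemma He_inj {t k q r i j i' j' : ℕ} (ht : 0 < t) (hk2 : 2 ≤ k) (hrkt : r ≤ k * t)
    (hkr : k ≤ r) (hi : i < q) (hj : j < q) (hi' : i' < q) (hj' : j' < q)
    (h : He t k q r i j = He t k q r i' j') : i = i' ∧ j = j' := by
  have hk : 0 < k := by omega
  have h0 := He_shared (ℓ := 0) ht hk hrkt hkr (by omega) hi hj hi' hj' h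
  have h1 := He_shared (ℓ := 1) ht hk hrkt hkr (by omega) hi hj hi' hj' h
  simp only [zero_mul, one_mul, add_zero] at h0 h1
  omega

end Stmt4Aux

open Stmt4Aux in
lemma main_construction {α : Type*} [Fintype α] [DecidableEq α] (F : SimpleGraph α)
    (t k r c q n : ℕ) (ht : 0 < t) (hk2 : 2 ≤ k) (hkr : k ≤ r) (hrkt : r ≤ k * t)
    (hq : 0 < q) (hn : k * k * q * t ≤ n) (hkc : k < c)
    (hcmin : ∀ k' : ℕ, ∀ P : Finpartition (Finset.univ : Finset α),
      IsAdmissible t F P → (contractGraph F P).chromaticNumber = (k' : ℕ∞) → c ≤ k') :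
    ∃ H : Finset (Finset (Fin n)),
      (∀ e ∈ H, e.card = r) ∧ ¬ IsBerge F H ∧ H.card = q * q := by
  have hk : 0 < k := by omega
  have hkq : 0 < k * q := Nat.mul_pos hk hq
  have hbound : ∀ i j, i < q → j < q → ∀ m ∈ He t k q r i j, m < n :=
    fun i j hi hj m hm => lt_of_lt_of_le (He_lt ht hk hrkt hi hj hm) hn
  set S : Finset (ℕ × ℕ) := Finset.range q ×ˢ Finset.range q with hS
  have hSmem : ∀ p : ℕ × ℕ, p ∈ S → p.1 < q ∧ p.2 < q := by
    intro p hp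
    rw [hS, Finset.mem_product, Finset.mem_range, Finset.mem_range] at hp
    exact hp
  set g : {p : ℕ × ℕ // p ∈ S} → Finset (Fin n) := fun p =>
    (He t k q r p.1.1 p.1.2).attachFin
      (fun m hm => hbound _ _ (hSmem _ p.2).1 (hSmem _ p.2).2 m hm) with hg
  have hmemg : ∀ (p : {p : ℕ × ℕ // p ∈ S}) (x : Fin n),
      x ∈ g p ↔ (x : ℕ) ∈ He t k q r p.1.1 p.1.2 := by
    intro p x
    rw [hg]
    exact Finset.mem_attachFin _
  refine ⟨S.attach.image g, ?_, ?_, ?_⟩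
  · intro e he
    obtain ⟨p, -, rfl⟩ := Finset.mem_image.1 he
    rw [hg, Finset.card_attachFin]
    exact card_He ht hk hrkt (hSmem _ p.2).1 (hSmem _ p.2).2
  · rintro ⟨ψ, φ, hψ, hφinj, hφH, hadjB⟩
    set f : α → ℕ := fun u => ((ψ u : Fin n) : ℕ) / t with hfdef
    have hedge : ∀ ⦃u w : α⦄, F.Adj u w → ∃ i j, i < q ∧ j < q ∧
        ∀ x : Fin n, x ∈ φ s(u, w) ↔ (x : ℕ) ∈ He t k q r i j := by
      intro u w huw
      have hmem := hφH _ (F.mem_edgeSet.mpr huw)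
      obtain ⟨p, -, hp⟩ := Finset.mem_image.1 hmem
      refine ⟨p.1.1, p.1.2, (hSmem _ p.2).1, (hSmem _ p.2).2, fun x => ?_⟩
      rw [← hp]
      exact hmemg p x
    have key : ∀ ⦃u w u' w' : α⦄, F.Adj u w → F.Adj u' w' → f u = f u' → f w = f w' →
        f u ≠ f w → φ s(u, w) = φ s(u', w') := by
      intro u w u' w' huw hu'w' huu hww hneq
      obtain ⟨i, j, hi, hj, hmem⟩ := hedge huw
      obtain ⟨i', j', hi', hj', hmem'⟩ := hedge hu'w'
      obtain ⟨ℓ₁, hℓ₁, hv₁, hd₁⟩ := He_decode ht hk hrkt hi hj ((hmem _).1 (hadjB huw).1)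
      obtain ⟨ℓ₂, hℓ₂, hv₂, hd₂⟩ := He_decode ht hk hrkt hi hj ((hmem _).1 (hadjB huw).2)
      obtain ⟨ℓ₁', hℓ₁', hv₁', hd₁'⟩ := He_decode ht hk hrkt hi' hj' ((hmem' _).1 (hadjB hu'w').1)
      obtain ⟨ℓ₂', hℓ₂', hv₂', hd₂'⟩ := He_decode ht hk hrkt hi' hj' ((hmem' _).1 (hadjB hu'w').2)
      have hfu : f u = ℓ₁ * (k * q) + (i + ℓ₁ * j) := hd₁
      have hfw : f w = ℓ₂ * (k * q) + (i + ℓ₂ * j) := hd₂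
      have hfu' : f u' = ℓ₁' * (k * q) + (i' + ℓ₁' * j') := hd₁'
      have hfw' : f w' = ℓ₂' * (k * q) + (i' + ℓ₂' * j') := hd₂'
      have e1 : ℓ₁ * (k * q) + (i + ℓ₁ * j) = ℓ₁' * (k * q) + (i' + ℓ₁' * j') := by
        rw [← hfu, ← hfu', huu]
      have e2 : ℓ₂ * (k * q) + (i + ℓ₂ * j) = ℓ₂' * (k * q) + (i' + ℓ₂' * j') := by
        rw [← hfw, ← hfw', hww]
      obtain ⟨hL1, hV1⟩ := decomp_inj hkq hv₁ hv₁' e1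
      obtain ⟨hL2, hV2⟩ := decomp_inj hkq hv₂ hv₂' e2
      rw [← hL1] at hV1
      rw [← hL2] at hV2
      have hℓne : ℓ₁ ≠ ℓ₂ := by
        intro hcon
        apply hneq
        rw [hfu, hfw, hcon]
      obtain ⟨hii, hjj⟩ := He_two hV1 hV2 hℓne
      subst hii; subst hjj
      exact Finset.ext fun x => by rw [hmem x, hmem' x]
    -- the partition
    let st : Setoid α := ⟨fun a b => f a = f b, ⟨fun _ => rfl, Eq.symm, Eq.trans⟩⟩
    haveI : DecidableRel st.r := fun a b => inferInstanceAs (Decidable (f a = f b))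
    set P := Finpartition.ofSetoid st with hP
    have hmemA : ∀ A ∈ P.parts, ∀ a ∈ A, ∀ b : α, (b ∈ A ↔ f a = f b) := by
      intro A hA a ha b
      rw [← P.part_eq_of_mem hA ha]
      exact Finpartition.mem_part_ofSetoid_iff_rel
    have hadm : IsAdmissible t F P := by
      constructor
      · intro A hA
        obtain ⟨a, ha⟩ := P.nonempty_of_mem_parts hA
        have hcard : A.card ≤ (Finset.range t).card := by
          apply Finset.card_le_card_of_injOn (fun b => ((ψ b : Fin n) : ℕ) % t)
          · intro b _
            simp only [Finset.mem_range]
            exact Finset.mem_coe.2 (Finset.mem_range.2 (Nat.mod_lt _ ht))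
          · intro b hb b' hb' hmod
            have h1 : f a = f b := (hmemA A hA a ha b).1 hb
            have h2 : f a = f b' := (hmemA A hA a ha b').1 hb'
            have hdiv3 : ((ψ b : Fin n) : ℕ) / t = ((ψ b' : Fin n) : ℕ) / t := by
              have h3 : f b = f b' := h1.symm.trans h2
              rw [hfdef] at h3
              exact h3
            have hmod3 : ((ψ b : Fin n) : ℕ) % t = ((ψ b' : Fin n) : ℕ) % t := hmod
            have hval : ((ψ b : Fin n) : ℕ) = ((ψ b' : Fin n) : ℕ) := by
              have e1 := Nat.div_add_mod ((ψ b : Fin n) : ℕ) t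
              have e2 := Nat.div_add_mod ((ψ b' : Fin n) : ℕ) t
              rw [← e1, hdiv3, hmod3]
              exact e2
            exact hψ (Fin.val_injective hval)
        rwa [Finset.card_range] at hcard
      · intro A hA B hB hAB
        rw [Set.ncard_le_one (Set.toFinite _)]
        rintro ⟨u, w⟩ ⟨hu, hw, huw⟩ ⟨u', w'⟩ ⟨hu', hw', hu'w'⟩
        simp only at hu hw huw hu' hw' hu'w'
        have hfu : f u = f u' := (hmemA A hA u hu u').1 hu'
        have hfw : f w = f w' := (hmemA B hB w hw w').1 hw'
        have hfneq : f u ≠ f w := by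
          intro hcon
          have hwA : w ∈ A := (hmemA A hA u hu w).2 hcon
          exact hAB (P.eq_of_mem_parts hA hB hwA hw)
        have hφeq := key huw hu'w' hfu hfw hfneq
        have hee : s(u, w) = s(u', w') :=
          hφinj (F.mem_edgeSet.mpr huw) (F.mem_edgeSet.mpr hu'w') hφeq
        rcases Sym2.eq_iff.1 hee with ⟨h1, h2⟩ | ⟨h1, h2⟩
        · rw [h1, h2]
        · exfalso
          apply hAB
          have huB : u ∈ B := by rw [h1]; exact hw'
          exact P.eq_of_mem_parts hA hB hu huB
    -- the coloring with k colors
    have hk1 : 1 ≤ k := hk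
    let rep : {A // A ∈ P.parts} → α := fun A => (P.nonempty_of_mem_parts A.2).choose
    have hrep : ∀ A : {A // A ∈ P.parts}, rep A ∈ A.1 :=
      fun A => (P.nonempty_of_mem_parts A.2).choose_spec
    let col : {A // A ∈ P.parts} → Fin k := fun A => ⟨min (f (rep A) / (k * q)) (k - 1), by omega⟩
    have hcol : ∀ {A B : {A // A ∈ P.parts}}, (contractGraph F P).Adj A B → col A ≠ col B := by
      rintro A B ⟨hABne, u, hu, w, hw, huw⟩
      obtain ⟨i, j, hi, hj, hmem⟩ := hedge huw
      obtain ⟨ℓ₁, hℓ₁, hv₁, hd₁⟩ := He_decode ht hk hrkt hi hj ((hmem _).1 (hadjB huw).1)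
      obtain ⟨ℓ₂, hℓ₂, hv₂, hd₂⟩ := He_decode ht hk hrkt hi hj ((hmem _).1 (hadjB huw).2)
      have hfA : f (rep A) = f u := ((hmemA A.1 A.2 u hu (rep A)).1 (hrep A)).symm
      have hfB : f (rep B) = f w := ((hmemA B.1 B.2 w hw (rep B)).1 (hrep B)).symm
      have hdivA : f u / (k * q) = ℓ₁ := by
        rw [show f u = ℓ₁ * (k * q) + (i + ℓ₁ * j) from hd₁, mul_comm ℓ₁,
          Nat.mul_add_div hkq, Nat.div_eq_of_lt hv₁, add_zero]
      have hdivB : f w / (k * q) = ℓ₂ := by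
        rw [show f w = ℓ₂ * (k * q) + (i + ℓ₂ * j) from hd₂, mul_comm ℓ₂,
          Nat.mul_add_div hkq, Nat.div_eq_of_lt hv₂, add_zero]
      have hcolA : (col A : ℕ) = ℓ₁ := by
        show min (f (rep A) / (k * q)) (k - 1) = ℓ₁
        rw [hfA, hdivA]
        omega
      have hcolB : (col B : ℕ) = ℓ₂ := by
        show min (f (rep B) / (k * q)) (k - 1) = ℓ₂
        rw [hfB, hdivB]
        omega
      have hℓne : ℓ₁ ≠ ℓ₂ := by
        intro hcon
        apply hABne
        have hfuw : f u = f w := by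
          rw [show f u = ℓ₁ * (k * q) + (i + ℓ₁ * j) from hd₁,
            show f w = ℓ₂ * (k * q) + (i + ℓ₂ * j) from hd₂, hcon]
        apply Subtype.ext
        exact P.eq_of_mem_parts A.2 B.2 ((hmemA A.1 A.2 u hu w).2 hfuw) hw
      intro hcc
      apply hℓne
      rw [← hcolA, ← hcolB, hcc]
    have hcolorable : (contractGraph F P).Colorable k :=
      ⟨SimpleGraph.Coloring.mk col (fun hAB => hcol hAB)⟩
    have hχle : (contractGraph F P).chromaticNumber ≤ (k : ℕ∞) :=
      hcolorable.chromaticNumber_le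
    have hne_top : (contractGraph F P).chromaticNumber ≠ ⊤ := by
      intro hcon
      rw [hcon] at hχle
      exact (by simp : ¬ (⊤ : ℕ∞) ≤ (k : ℕ∞)) hχle
    have hk'eq : (contractGraph F P).chromaticNumber
        = (((contractGraph F P).chromaticNumber.toNat : ℕ) : ℕ∞) :=
      (ENat.coe_toNat hne_top).symm
    have hck' : c ≤ (contractGraph F P).chromaticNumber.toNat := hcmin _ P hadm hk'eq
    have hk'k : (contractGraph F P).chromaticNumber.toNat ≤ k := by
      rw [hk'eq] at hχle
      exact_mod_cast hχle
    omega
  · -- cardinality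
    rw [Finset.card_image_of_injOn, Finset.card_attach]
    · rw [hS, Finset.card_product, Finset.card_range]
    · intro p _ p' _ hpp
      have hHe : He t k q r p.1.1 p.1.2 = He t k q r p'.1.1 p'.1.2 := by
        ext m
        constructor
        · intro hm
          have hmn : m < n := hbound _ _ (hSmem _ p.2).1 (hSmem _ p.2).2 m hm
          have : (⟨m, hmn⟩ : Fin n) ∈ g p := (hmemg p _).2 hm
          rw [hpp] at this
          exact (hmemg p' _).1 this
        · intro hm
          have hmn : m < n := hbound _ _ (hSmem _ p'.2).1 (hSmem _ p'.2).2 m hm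
          have : (⟨m, hmn⟩ : Fin n) ∈ g p' := (hmemg p' _).2 hm
          rw [← hpp] at this
          exact (hmemg p _).1 this
      obtain ⟨h1, h2⟩ := He_inj ht hk2 hrkt hkr (hSmem _ p.2).1 (hSmem _ p.2).2
        (hSmem _ p'.2).1 (hSmem _ p'.2).2 hHe
      apply Subtype.ext
      exact Prod.ext h1 h2


/-- Let `c` be the minimum chromatic number of a contraction of `F` along a
`t`-admissible partition. If `c ≥ 3`, then for every `2 ≤ r ≤ (c-1)t` there is `c' > 0`
such that for all large `n` there is an `r`-uniform Berge-`F`-free hypergraph on `n`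
vertices with at least `c' n^2` hyperedges; consequently `exr r n F = Ω(n^2)`. -/
theorem stmt4 {α : Type*} [Fintype α] [DecidableEq α] (F : SimpleGraph α)
    (t : ℕ) (ht1 : 1 ≤ t) (ht2 : t ≤ Fintype.card α - 1)
    (c : ℕ)
    (hcmin : IsLeast {k : ℕ | ∃ P : Finpartition (Finset.univ : Finset α),
      IsAdmissible t F P ∧ (contractGraph F P).chromaticNumber = (k : ℕ∞)} c)
    (hc : 3 ≤ c)
    (r : ℕ) (hr2 : 2 ≤ r) (hr : r ≤ (c - 1) * t) :
    ∃ c' : ℝ, 0 < c' ∧ ∀ᶠ n : ℕ in atTop,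
      (∃ H : Finset (Finset (Fin n)),
        (∀ e ∈ H, e.card = r) ∧ ¬ IsBerge F H ∧ c' * (n : ℝ) ^ 2 ≤ (H.card : ℝ)) ∧
      c' * (n : ℝ) ^ 2 ≤ (exr r n F : ℝ) := by
  obtain ⟨t', rfl⟩ : ∃ t', t = t' + 1 := ⟨t - 1, by omega⟩
  obtain ⟨c'', rfl⟩ : ∃ c'', c = c'' + 3 := ⟨c - 3, by omega⟩
  set t := t' + 1
  set c := c'' + 3
  have ht : 0 < t := Nat.succ_pos _
  have hsub : r + t - 1 = r + t' := by omega
  have hcm1 : c - 1 = c'' + 2 := by omega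
  rw [hcm1] at hr
  set k := max 2 ((r + t - 1) / t) with hkdef
  have hk2 : 2 ≤ k := le_max_left _ _
  have hkr : k ≤ r := by
    have h1 : (r + t - 1) / t ≤ r := by
      have h2 : r + t - 1 < (r + 1) * t := by
        rw [hsub]
        have hexp : (r + 1) * t = r * t' + r + t' + 1 := by ring
        have hrr : r ≤ r * t' + r := by linarith [Nat.zero_le (r * t')]
        linarith
      have := (Nat.div_lt_iff_lt_mul ht).2 h2
      omega
    rw [hkdef]
    exact max_le hr2 h1
  have hrkt : r ≤ k * t := by
    have hd := Nat.div_add_mod (r + t - 1) t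
    have hm : (r + t - 1) % t < t := Nat.mod_lt _ ht
    rw [hsub] at hd
    have h1 : r ≤ t * ((r + t - 1) / t) := by
      have hdd : t * ((r + t - 1) / t) + (r + t - 1) % t = r + t' := hd
      have htt : t = t' + 1 := rfl
      linarith
    have h2 : (r + t - 1) / t ≤ k := le_max_right _ _
    calc r ≤ t * ((r + t - 1) / t) := h1
    _ ≤ t * k := Nat.mul_le_mul_left t h2
    _ = k * t := mul_comm t k
  have hkc : k < c := by
    have h1 : (r + t - 1) / t < c := by
      rw [Nat.div_lt_iff_lt_mul ht, hsub]
      have hexp : c * t = (c'' + 2) * t + t := by rw [show c = c'' + 2 + 1 from rfl]; ring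
      have htt : t = t' + 1 := rfl
      linarith
    have h2 : (2 : ℕ) < c := by omega
    rw [hkdef]
    exact max_lt h2 h1
  have hcmin' : ∀ k' : ℕ, ∀ P : Finpartition (Finset.univ : Finset α),
      IsAdmissible t F P → (contractGraph F P).chromaticNumber = (k' : ℕ∞) → c ≤ k' :=
    fun k' P hadm heq => hcmin.2 ⟨P, hadm, heq⟩
  set K := k * k * t with hKdef
  have hK0 : 0 < K := by positivity
  refine ⟨1 / (4 * (K : ℝ) ^ 2), by positivity, ?_⟩
  rw [Filter.eventually_atTop]
  refine ⟨2 * K, fun n hn => ?_⟩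
  set q := n / K with hqdef
  have hq2 : 2 ≤ q := (Nat.le_div_iff_mul_le hK0).2 hn
  have hq0 : 0 < q := by omega
  have hbound : k * k * q * t ≤ n := by
    have h1 : k * k * q * t = q * K := by rw [hKdef]; ring
    rw [h1, hqdef]
    exact Nat.div_mul_le_self n K
  obtain ⟨H, hunif, hberge, hcard⟩ :=
    main_construction F t k r c q n ht hk2 hkr hrkt hq0 hbound hkc hcmin'
  -- real counting
  have hdm : K * q + n % K = n := Nat.div_add_mod n K
  have hmK : n % K < K := Nat.mod_lt _ hK0
  have hKq : K ≤ K * q := by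
    calc K = K * 1 := (mul_one K).symm
    _ ≤ K * q := Nat.mul_le_mul_left K hq0
  have hn2 : n ≤ 2 * (K * q) := by linarith
  have hq_real : (n : ℝ) ≤ 2 * (K : ℝ) * (q : ℝ) := by
    have := (Nat.cast_le (α := ℝ)).2 hn2
    push_cast at this
    linarith
  have h1 : (n : ℝ) ^ 2 ≤ (2 * (K : ℝ) * (q : ℝ)) ^ 2 := by
    have hn0 : (0 : ℝ) ≤ (n : ℝ) := Nat.cast_nonneg n
    nlinarith
  have hKne : (K : ℝ) ≠ 0 := by positivity
  have h2 : (1 / (4 * (K : ℝ) ^ 2)) * (2 * (K : ℝ) * (q : ℝ)) ^ 2 = (q : ℝ) * (q : ℝ) := by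
    field_simp
    ring
  have hmain : (1 / (4 * (K : ℝ) ^ 2)) * (n : ℝ) ^ 2 ≤ ((H.card : ℕ) : ℝ) := by
    rw [hcard]
    push_cast
    calc (1 / (4 * (K : ℝ) ^ 2)) * (n : ℝ) ^ 2
        ≤ (1 / (4 * (K : ℝ) ^ 2)) * (2 * (K : ℝ) * (q : ℝ)) ^ 2 := by
          apply mul_le_mul_of_nonneg_left h1
          positivity
    _ = (q : ℝ) * (q : ℝ) := h2
  refine ⟨⟨H, hunif, hberge, hmain⟩, ?_⟩
  have hBdd : BddAbove {m | ∃ H : Finset (Finset (Fin n)),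
      (∀ e ∈ H, e.card = r) ∧ ¬ IsBerge F H ∧ H.card = m} := by
    refine ⟨2 ^ n, fun m hm => ?_⟩
    obtain ⟨H', -, -, rfl⟩ := hm
    calc H'.card ≤ (Finset.univ : Finset (Finset (Fin n))).card := Finset.card_le_univ H'
    _ = Fintype.card (Finset (Fin n)) := rfl
    _ = 2 ^ Fintype.card (Fin n) := Fintype.card_finset
    _ = 2 ^ n := by rw [Fintype.card_fin]
  have hle : H.card ≤ exr r n F := by
    rw [exr]
    exact le_csSup hBdd ⟨H, hunif, hberge, rfl⟩
  calc (1 / (4 * (K : ℝ) ^ 2)) * (n : ℝ) ^ 2 ≤ ((H.card : ℕ) : ℝ) := hmain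
  _ ≤ (exr r n F : ℝ) := Nat.cast_le.2 hle
end

section
/- Let F be a simple graph with at least one edge, with chromatic number k = χ(F), and let r ≥ k. There exists w_0 (depending only on F and r) such that for every w ≥ w_0 the following holds: if H is an r-uniform linear hypergraph whose 2-shadow Γ(H) contains as a subgraph a complete k-partite graph with w vertices in each of its k classes, then H contains a Berge-F. -/
/-!
Colour `F` properly with `k` colours and order its vertices. Embed the vertices one at a time,
sending `a` into the class of the blowup indexed by its colour, avoiding the earlier images and
every hyperedge that already contains two earlier images. Linearity bounds the number of such
hyperedges by a function of `|V(F)|`, so this is possible once `w` is large. Every pair of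
adjacent images lies in a hyperedge because the blowup sits in the shadow; and a hyperedge meets
the image in at most two vertices, since its last vertex would otherwise have been avoided, so
distinct edges of `F` get distinct hyperedges.
-/

open Filter

section Greedy

open Finset

variable {α V : Type*} [LinearOrder α] [Fintype α] [DecidableEq V]

theorem exists_greedy_choice (cls : α → Finset V) (bad : Finset V → Finset V)
    (h : ∀ a (S : Finset V), #S < Fintype.card α → #(bad S) < #(cls a)) :
    ∃ ψ : α → V, ∀ a, ψ a ∈ cls a ∧ ψ a ∉ bad ((univ.filter (· < a)).image ψ) := by
  have hne : ∀ a, (cls a).Nonempty := fun a =>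
    card_pos.mp ((Nat.zero_le _).trans_lt (h a ∅ (Fintype.card_pos_iff.mpr ⟨a⟩)))
  suffices ∀ s : Finset α, ∃ ψ : α → V,
      ∀ a ∈ s, ψ a ∈ cls a ∧ ψ a ∉ bad ((s.filter (· < a)).image ψ) by
    simpa using this univ
  intro s
  induction s using Finset.induction_on_max with
  | empty => exact ⟨fun a => (hne a).choose, by simp⟩
  | insert a s hlt ih =>
    obtain ⟨ψ, hψ⟩ := ih
    have has : a ∉ s := fun ha => (hlt a ha).false
    have hcard : #(s.image ψ) < Fintype.card α :=
      card_image_le.trans_lt (card_lt_univ_of_notMem has)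
    obtain ⟨v, hv, hvbad⟩ := exists_mem_notMem_of_card_lt_card (h a _ hcard)
    have himage : ∀ t ⊆ s, t.image (Function.update ψ a v) = t.image ψ := fun t ht =>
      image_congr fun x hx => Function.update_of_ne (by rintro rfl; exact has (ht hx)) v ψ
    refine ⟨Function.update ψ a v, ?_⟩
    intro x hx
    rcases mem_insert.mp hx with rfl | hx
    · have : (insert x s).filter (· < x) = s := by
        rw [filter_insert, if_neg (lt_irrefl x), filter_true_of_mem hlt]
      rw [this, himage s subset_rfl, Function.update_self]
      exact ⟨hv, hvbad⟩
    · have : (insert a s).filter (· < x) = s.filter (· < x) := by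
        rw [filter_insert, if_neg (hlt x hx).not_gt]
      rw [this, himage _ (filter_subset _ _), Function.update_of_ne (hlt x hx).ne]
      exact hψ x hx

end Greedy

section Blocked

open Finset

variable {V : Type*} [DecidableEq V] (H : Finset (Finset V))

def blocked (S : Finset V) : Finset V :=
  S ∪ (H.filter fun E => 1 < #(S ∩ E)).biUnion id

theorem mem_blocked_of_mem_hyperedge {S : Finset V} {E : Finset V} (hE : E ∈ H)
    {x y z : V} (hx : x ∈ S) (hy : y ∈ S) (hxy : x ≠ y) (hxE : x ∈ E) (hyE : y ∈ E)
    (hz : z ∈ E) : z ∈ blocked H S := by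
  refine mem_union_right _ (mem_biUnion.mpr ⟨E, mem_filter.mpr ⟨hE, ?_⟩, hz⟩)
  exact one_lt_card.mpr ⟨x, mem_inter.mpr ⟨hx, hxE⟩, y, mem_inter.mpr ⟨hy, hyE⟩, hxy⟩

variable {H}

theorem LinearHypergraph.card_filter_one_lt_card_inter_le (hlin : LinearHypergraph H)
    (S : Finset V) : #(H.filter fun E => 1 < #(S ∩ E)) ≤ #S * #S := by
  have hdisj : ((H.filter fun E => 1 < #(S ∩ E) : Finset _) : Set (Finset V)).PairwiseDisjoint
      fun E => (S ∩ E).offDiag := by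
    intro E hE E' hE' hne
    refine disjoint_left.mpr fun p hp hp' => ?_
    simp only [mem_offDiag, mem_inter] at hp hp'
    obtain ⟨⟨-, h1⟩, ⟨-, h2⟩, h12⟩ := hp
    obtain ⟨⟨-, h1'⟩, ⟨-, h2'⟩, -⟩ := hp'
    have := hlin E (mem_filter.mp hE).1 E' (mem_filter.mp hE').1 hne
    have := one_lt_card.mpr ⟨p.1, mem_inter.mpr ⟨h1, h1'⟩, p.2, mem_inter.mpr ⟨h2, h2'⟩, h12⟩
    omega
  calc #(H.filter fun E => 1 < #(S ∩ E))
      ≤ #((H.filter fun E => 1 < #(S ∩ E)).biUnion fun E => (S ∩ E).offDiag) :=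
        card_le_card_biUnion hdisj fun E hE => by
          rw [← card_pos, offDiag_card]
          have := (mem_filter.mp hE).2
          exact Nat.sub_pos_of_lt (by nlinarith)
    _ ≤ #S.offDiag := card_le_card (biUnion_subset.mpr fun E _ => offDiag_mono inter_subset_left)
    _ ≤ #S * #S := offDiag_card S ▸ Nat.sub_le _ _

theorem LinearHypergraph.card_blocked_le (hlin : LinearHypergraph H) {r : ℕ}
    (hcard : ∀ E ∈ H, #E ≤ r) (S : Finset V) : #(blocked H S) ≤ #S + #S * #S * r := by
  calc #(blocked H S)
      ≤ #S + #(H.filter fun E => 1 < #(S ∩ E)) * r :=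
        (card_union_le _ _).trans (Nat.add_le_add_left
          (card_biUnion_le_card_mul _ _ _ fun E hE => hcard E (mem_filter.mp hE).1) _)
    _ ≤ #S + #S * #S * r := by gcongr; exact hlin.card_filter_one_lt_card_inter_le S

end Blocked

section Berge

open Finset

variable {α V : Type*} [LinearOrder α] [Fintype α] [DecidableEq V]

def IsGreedyEmbedding (H : Finset (Finset V)) (ψ : α → V) : Prop :=
  ∀ a, ψ a ∉ blocked H ((univ.filter (· < a)).image ψ)

variable {H : Finset (Finset V)} {ψ : α → V}

namespace IsGreedyEmbedding

theorem injective (hψ : IsGreedyEmbedding H ψ) : Function.Injective ψ := by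
  intro a b hab
  by_contra hne
  rcases lt_or_gt_of_ne hne with h | h
  · exact hψ b (mem_union_left _ (mem_image.mpr ⟨a, by simpa using h, hab⟩))
  · exact hψ a (mem_union_left _ (mem_image.mpr ⟨b, by simpa using h, hab.symm⟩))

theorem card_filter_mem_le_two (hψ : IsGreedyEmbedding H ψ) {E : Finset V} (hE : E ∈ H) :
    #(univ.filter fun a => ψ a ∈ E) ≤ 2 := by
  set T := univ.filter fun a => ψ a ∈ E
  by_contra! hT
  have hTne : T.Nonempty := card_pos.mp (by omega)
  set m := T.max' hTne
  have hmem : ∀ {a}, a ∈ T → ψ a ∈ E := fun ha => (mem_filter.mp ha).2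
  have hbelow : ∀ {a}, a ∈ T.erase m → ψ a ∈ (univ.filter (· < m)).image ψ := fun ha =>
    mem_image_of_mem ψ (mem_filter.mpr ⟨mem_univ _, T.lt_max'_of_mem_erase_max' hTne ha⟩)
  obtain ⟨b, hb, c, hc, hbc⟩ := one_lt_card.mp (show 1 < #(T.erase m) by
    rw [card_erase_of_mem (T.max'_mem hTne)]; omega)
  exact hψ m (mem_blocked_of_mem_hyperedge H hE (hbelow hb) (hbelow hc) (hψ.injective.ne hbc)
    (hmem (mem_of_mem_erase hb)) (hmem (mem_of_mem_erase hc)) (hmem (T.max'_mem hTne)))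

theorem mem_of_mem_hyperedge (hψ : IsGreedyEmbedding H ψ) {E : Finset V} (hE : E ∈ H)
    {u v a : α} (huv : u ≠ v) (hu : ψ u ∈ E) (hv : ψ v ∈ E) (ha : ψ a ∈ E) : a ∈ s(u, v) := by
  have hT : {u, v} = univ.filter fun a => ψ a ∈ E :=
    eq_of_subset_of_card_le (by simp [insert_subset_iff, hu, hv])
      (by rw [card_pair huv]; exact hψ.card_filter_mem_le_two hE)
  have : a ∈ ({u, v} : Finset α) := hT ▸ mem_filter.mpr ⟨mem_univ a, ha⟩
  simpa using this

theorem isBerge (hψ : IsGreedyEmbedding H ψ) {F : SimpleGraph α}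
    (hF : ∀ ⦃u v⦄, F.Adj u v → (_root_.shadow H).Adj (ψ u) (ψ v)) : IsBerge F H := by
  have hcover : ∀ q ∈ F.edgeSet, ∃ E ∈ H, ∀ x ∈ q, ψ x ∈ E := by
    intro q hq
    induction q using Sym2.ind with
    | _ u v =>
      obtain ⟨-, E, hE, hu, hv⟩ := hF hq
      exact ⟨E, hE, by simp [hu, hv]⟩
  choose! φ hφH hφmem using hcover
  refine ⟨ψ, φ, hψ.injective, ?_, hφH, fun u v huv =>
    ⟨hφmem _ huv _ (Sym2.mem_mk_left u v), hφmem _ huv _ (Sym2.mem_mk_right u v)⟩⟩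
  intro q hq q' hq' heq
  induction q using Sym2.ind with
  | _ u v =>
  induction q' using Sym2.ind with
  | _ u' v' =>
    have hE := hφH _ hq
    have hmem : ∀ {x}, x ∈ s(u', v') → ψ x ∈ φ s(u, v) := fun hx => heq ▸ hφmem _ hq' _ hx
    have hsub : ∀ {x}, x ∈ s(u', v') → x ∈ s(u, v) := fun hx =>
      hψ.mem_of_mem_hyperedge hE (F.ne_of_adj hq) (hφmem _ hq _ (Sym2.mem_mk_left u v))
        (hφmem _ hq _ (Sym2.mem_mk_right u v)) (hmem hx)
    exact (Sym2.mem_and_mem_iff (F.ne_of_adj hq')).mp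
      ⟨hsub (Sym2.mem_mk_left u' v'), hsub (Sym2.mem_mk_right u' v')⟩

end IsGreedyEmbedding

end Berge

theorem stmt14_general {α : Type*} [Fintype α] (F : SimpleGraph α)
    (k : ℕ) (hk : F.chromaticNumber = (k : ℕ∞))
    (r : ℕ) :
    ∃ w₀ : ℕ, ∀ w : ℕ, w₀ ≤ w → ∀ (V : Type) [DecidableEq V],
      ∀ H : Finset (Finset V),
        (∀ h ∈ H, h.card = r) → LinearHypergraph H →
        ContainsCopy ((⊤ : SimpleGraph (Fin k)).comap (Prod.fst : Fin k × Fin w → Fin k))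
          (shadow H) →
        IsBerge F H := by
  obtain ⟨C⟩ := SimpleGraph.chromaticNumber_le_iff_colorable.mp hk.le
  let _ : LinearOrder α := LinearOrder.lift' _ (Fintype.equivFin α).injective
  set n := Fintype.card α
  refine ⟨n + n * n * r, fun w hw V _ H hcard hlin ⟨f, hf, hfadj⟩ => ?_⟩
  let cls : α → Finset V := fun a => Finset.univ.image fun y : Fin w => f (C a, y)
  have hcls : ∀ a, (cls a).card = w := fun a => by
    rw [Finset.card_image_of_injective _ fun y y' h => by simpa using congrArg Prod.snd (hf h)]
    exact Finset.card_fin w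
  obtain ⟨ψ, hψ⟩ := exists_greedy_choice cls (blocked H) fun a S hS =>
    calc (blocked H S).card ≤ S.card + S.card * S.card * r :=
          hlin.card_blocked_le (fun E hE => (hcard E hE).le) S
      _ < n + n * n * r := Nat.add_lt_add_of_lt_of_le hS (by gcongr)
      _ ≤ (cls a).card := hcls a ▸ hw
  refine IsGreedyEmbedding.isBerge (fun a => (hψ a).2) fun u v huv => ?_
  obtain ⟨y, -, hy⟩ := Finset.mem_image.mp (hψ u).1
  obtain ⟨y', -, hy'⟩ := Finset.mem_image.mp (hψ v).1
  rw [← hy, ← hy']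
  exact hfadj (by simpa using C.valid huv)

/-- If `F` has an edge, `χ(F) = k` and `r ≥ k`, there is `w₀` (depending only
on `F` and `r`) such that for all `w ≥ w₀`: every `r`-uniform linear hypergraph whose
2-shadow contains a copy of the complete `k`-partite graph with `w` vertices per class
contains a Berge-`F`. -/
theorem stmt14 {α : Type*} [Fintype α] (F : SimpleGraph α)
    (hF : F.edgeSet.Nonempty) (k : ℕ) (hk : F.chromaticNumber = (k : ℕ∞))
    (r : ℕ) (hr : k ≤ r) :
    ∃ w₀ : ℕ, ∀ w : ℕ, w₀ ≤ w → ∀ (V : Type) [DecidableEq V],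
      ∀ H : Finset (Finset V),
        (∀ h ∈ H, h.card = r) → LinearHypergraph H →
        ContainsCopy ((⊤ : SimpleGraph (Fin k)).comap (Prod.fst : Fin k × Fin w → Fin k))
          (shadow H) →
        IsBerge F H :=
  stmt14_general F k hk r
end
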